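/- arXiv:1908.03914 — 2 statements merged into one kernel-verified Lean document; each statement's English description precedes it below -/
import Mathlib

section
/- Let q ≥ 2 be an integer, let F_q denote the set of functions f : ℕ → ℤ such that qⁿ ∣ (Δⁿf)(x) for all n ≥ 0 and all x ≥ 0, let b ∈ F_q, and define the sequence of functions f₁ = b and f_{k+1}(x) = b(x) · ⟨f_k, f_k, …, f_k⟩(x) (q copies of f_k) for k ≥ 1 (so f_k is the average weight function of the complete q-ary tree of depth k, and each f_k ∈ F_q). Then for all k ≥ 1 and all m ≥ 0, ε_m^{f_k} ≡ ε_m^b · (ε_0^b)^{(q^k−1)/(q−1) − 1} (mod q). -/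
/-- The finite difference operator: `(Δ f)(x) = f(x+1) - f(x)`. -/
def delta (f : ℕ → ℤ) : ℕ → ℤ := fun x => f (x + 1) - f x

/-- Membership in the set `F_q` of functions `f : ℕ → ℤ` with `q^n ∣ (Δ^n f)(x)`
for all `n` and `x`. -/
def memFq (q : ℕ) (f : ℕ → ℤ) : Prop :=
  ∀ (n : ℕ) (x : ℕ), (q : ℤ) ^ n ∣ (delta^[n] f) x

/-- For `f ∈ F_q`, `epsq q f n` is (a representative in `[0, q)` of) the element of
`ℤ/qℤ` with `(Δ^n f)(x) ≡ epsq q f n · q^n (mod q^(n+1))` for all `x`. -/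
def epsq (q : ℕ) (f : ℕ → ℤ) (n : ℕ) : ℤ := ((delta^[n] f) 0 / (q : ℤ) ^ n) % (q : ℤ)

/-!
By the Leibniz rule for `Δ`, `F_q` is a subring of `ℕ → ℤ`, and if `ε_n^h = 0` for all `n ≥ 1`
then `ε_m^{b h} = ε_m^b · h(0)`. For `g ∈ F_q` write `g(x + 1) = g(x) + q d(x)` with `d ∈ F_q`.
The binomial theorem puts `Δ(g^q)` in `q² F_q`, hence also `Δ⟨g, …, g⟩`, since
`⟨g, …, g⟩ = g^q + q d g^(q-1)`. So `ε_m^{f_(k+1)} ≡ ε_m^b · f_k(1) f_k(0)^(q-1) ≡ ε_m^b · f_k(0)^q`,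
and `f_k(0) ≡ b(0)^(1 + q + ⋯ + q^(k-1))` by induction on `k`.
-/

open Finset fwdDiff

section Leibniz
variable {M R : Type*} [AddCommMonoid M] [CommRing R] (h : M)

lemma fwdDiff_mul (f g : M → R) :
    Δ_[h] (f * g) = Δ_[h] f * (fun y ↦ g (y + h)) + f * Δ_[h] g := by
  ext y; simp only [fwdDiff, Pi.mul_apply, Pi.add_apply]; ring

theorem fwdDiff_iter_mul (f g : M → R) (n : ℕ) (y : M) :
    (Δ_[h])^[n] (f * g) y = ∑ ij ∈ antidiagonal n,
      (n.choose ij.1 : R) * (Δ_[h])^[ij.1] f y * (Δ_[h])^[ij.2] g (y + ij.1 • h) := by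
  induction n generalizing f g with
  | zero => simp
  | succ n ih =>
    simp only [mul_assoc] at ih ⊢
    rw [Function.iterate_succ_apply, fwdDiff_mul, fwdDiff_iter_add, Pi.add_apply, ih, ih,
      sum_antidiagonal_choose_succ_mul (fun i j ↦ (Δ_[h])^[i] f y * (Δ_[h])^[j] g (y + i • h))]
    rw [add_comm]
    congr 1
    refine sum_congr rfl fun ij hij ↦ ?_
    rw [Nat.choose_symm_of_eq_add (mem_antidiagonal.mp hij).symm, fwdDiff_iter_comp_add,
      Function.iterate_succ_apply, succ_nsmul, add_assoc]

end Leibniz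

lemma Int.ModEq.ediv_of_dvd {a b c n : ℤ} (hc : c ≠ 0) (ha : c ∣ a) (hb : c ∣ b)
    (h : a ≡ b [ZMOD c * n]) : a / c ≡ b / c [ZMOD n] := by
  obtain ⟨a, rfl⟩ := ha
  obtain ⟨b, rfl⟩ := hb
  rw [Int.mul_ediv_cancel_left _ hc, Int.mul_ediv_cancel_left _ hc]
  exact h.mul_left_cancel' hc

section Fq
variable {q : ℕ}

lemma delta_eq_fwdDiff : delta = Δ_[1] := rfl

lemma memFq_const (c : ℤ) : memFq q fun _ ↦ c := by
  rintro (_ | n) x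
  · simp
  · rw [Function.iterate_succ_apply, delta_eq_fwdDiff, fwdDiff_const,
      Function.iterate_fixed (fwdDiff_const 1 0)]
    exact dvd_zero _

lemma memFq_mul {f g : ℕ → ℤ} (hf : memFq q f) (hg : memFq q g) : memFq q (f * g) := by
  intro n x
  rw [delta_eq_fwdDiff, fwdDiff_iter_mul]
  refine dvd_sum fun ij hij ↦ ?_
  rw [← mem_antidiagonal.mp hij, pow_add]
  exact mul_dvd_mul (dvd_mul_of_dvd_right (hf _ _) _) (hg _ _)

def Fq (q : ℕ) : Subring (ℕ → ℤ) where
  carrier := {f | memFq q f}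
  mul_mem' := memFq_mul
  one_mem' := memFq_const 1
  add_mem' {f g} hf hg n x := by
    rw [delta_eq_fwdDiff, fwdDiff_iter_add]
    exact dvd_add (hf n x) (hg n x)
  zero_mem' := memFq_const 0
  neg_mem' {f} hf n x := by
    rw [← neg_one_smul ℤ f, delta_eq_fwdDiff, fwdDiff_iter_const_smul, Pi.smul_apply, smul_eq_mul]
    exact dvd_mul_of_dvd_right (hf n x) _

lemma comp_add_one_mem_Fq {f : ℕ → ℤ} (hf : f ∈ Fq q) : (fun x ↦ f (x + 1)) ∈ Fq q := by
  intro n x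
  rw [delta_eq_fwdDiff, fwdDiff_iter_comp_add]
  exact hf n (x + 1)

lemma exists_comp_add_one_eq (hq : q ≠ 0) {f : ℕ → ℤ} (hf : f ∈ Fq q) :
    ∃ d ∈ Fq q, (fun x ↦ f (x + 1)) = f + (q : ℤ) • d := by
  have hq' : (q : ℤ) ≠ 0 := by exact_mod_cast hq
  have hdelta : delta f = (q : ℤ) • fun x ↦ delta f x / q := by
    funext x
    exact (Int.mul_ediv_cancel' (by simpa using hf 1 x)).symm
  refine ⟨fun x ↦ delta f x / q, fun n x ↦ ?_, ?_⟩
  · have h := hf (n + 1) x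
    rw [Function.iterate_succ_apply, hdelta, delta_eq_fwdDiff, fwdDiff_iter_const_smul,
      Pi.smul_apply, smul_eq_mul, pow_succ'] at h
    exact (mul_dvd_mul_iff_left hq').mp h
  · rw [← hdelta]
    funext x
    simp [delta]

/-- `ε_n^h = 0` for all `n ≥ 1`. -/
def IsEpsFlat (q : ℕ) (h : ℕ → ℤ) : Prop :=
  ∀ n x, (q : ℤ) ^ (n + 2) ∣ delta^[n + 1] h x

lemma IsEpsFlat.memFq {h : ℕ → ℤ} (hh : IsEpsFlat q h) : memFq q h := by
  rintro (_ | n) x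
  · simp
  · exact (pow_dvd_pow _ (Nat.le_succ _)).trans (hh n x)

lemma IsEpsFlat.add {g h : ℕ → ℤ} (hg : IsEpsFlat q g) (hh : IsEpsFlat q h) :
    IsEpsFlat q (g + h) := by
  intro n x
  rw [delta_eq_fwdDiff, fwdDiff_iter_add]
  exact dvd_add (hg n x) (hh n x)

lemma isEpsFlat_smul {u : ℕ → ℤ} (hu : u ∈ Fq q) : IsEpsFlat q ((q : ℤ) • u) := by
  intro n x
  rw [delta_eq_fwdDiff, fwdDiff_iter_const_smul, Pi.smul_apply, smul_eq_mul, pow_succ']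
  exact mul_dvd_mul_left _ (hu (n + 1) x)

lemma isEpsFlat_of_delta_eq {h w : ℕ → ℤ} (hw : w ∈ Fq q) (hdelta : delta h = (q : ℤ) ^ 2 • w) :
    IsEpsFlat q h := by
  intro n x
  rw [Function.iterate_succ_apply, hdelta, delta_eq_fwdDiff, fwdDiff_iter_const_smul,
    Pi.smul_apply, smul_eq_mul, pow_add, mul_comm]
  exact mul_dvd_mul_left _ (hw n x)

/-- Writing `g(x + 1) = g(x) + q d(x)`, the binomial theorem gives
`Δ(g^q) = q² (g^(q-1) d + d² z)` with `z` in the ring `F_q`. -/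
lemma isEpsFlat_pow (hq : q ≠ 0) {g : ℕ → ℤ} (hg : g ∈ Fq q) : IsEpsFlat q (g ^ q) := by
  obtain ⟨d, hd, hshift⟩ := exists_comp_add_one_eq hq hg
  obtain ⟨z, hz⟩ := sq_dvd_add_pow_sub_sub ((q : Fq q) * ⟨d, hd⟩) ⟨g, hg⟩ q
  refine isEpsFlat_of_delta_eq (w := g ^ (q - 1) * d + d ^ 2 * z)
    (add_mem (mul_mem (pow_mem hg _) hd) (mul_mem (pow_mem hd _) z.2)) ?_
  funext x
  have hzx := congrFun (congrArg (Fq q).subtype hz) x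
  have hsx := congrFun hshift x
  simp only [map_sub, map_mul, map_add, map_pow, map_natCast, Subring.subtype_apply,
    Pi.mul_apply, Pi.sub_apply, Pi.add_apply, Pi.pow_apply, Pi.natCast_apply, Pi.smul_apply,
    smul_eq_mul] at hzx hsx ⊢
  rw [delta, Pi.pow_apply, Pi.pow_apply, hsx]
  linear_combination hzx

/-- `⟨g, …, g⟩` with `q` copies of `g`. -/
def selfBracket (q : ℕ) (g : ℕ → ℤ) : ℕ → ℤ := (fun x ↦ g (x + 1)) * g ^ (q - 1)

lemma selfBracket_mem_Fq {g : ℕ → ℤ} (hg : g ∈ Fq q) : selfBracket q g ∈ Fq q :=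
  mul_mem (comp_add_one_mem_Fq hg) (pow_mem hg _)

lemma isEpsFlat_selfBracket (hq : q ≠ 0) {g : ℕ → ℤ} (hg : g ∈ Fq q) :
    IsEpsFlat q (selfBracket q g) := by
  obtain ⟨d, hd, hshift⟩ := exists_comp_add_one_eq hq hg
  have h : selfBracket q g = g ^ q + (q : ℤ) • (d * g ^ (q - 1)) := by
    rw [selfBracket, hshift, add_mul, mul_pow_sub_one hq, smul_mul_assoc]
  rw [h]
  exact (isEpsFlat_pow hq hg).add (isEpsFlat_smul (mul_mem hd (pow_mem hg _)))

lemma selfBracket_zero_modEq (hq : q ≠ 0) {g : ℕ → ℤ} (hg : memFq q g) :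
    selfBracket q g 0 ≡ g 0 ^ q [ZMOD q] := by
  have h : g 1 ≡ g 0 [ZMOD q] := (Int.modEq_iff_dvd.mpr (by simpa [delta] using hg 1 0)).symm
  simpa [selfBracket, mul_pow_sub_one hq] using h.mul_right (g 0 ^ (q - 1))

lemma IsEpsFlat.apply_add_modEq {h : ℕ → ℤ} (hh : IsEpsFlat q h) (x m : ℕ) :
    h (x + m) ≡ h x [ZMOD q] := by
  induction m with
  | zero => rfl
  | succ m ih =>
    rw [← add_assoc]
    refine (Int.modEq_iff_dvd.mpr ?_).symm.trans ih
    exact (dvd_pow_self _ two_ne_zero).trans (by simpa [delta] using hh 0 (x + m))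

/-- Every term of the Leibniz expansion of `Δ^m (b h)` except `Δ^m b · h(· + m)` is divisible
by `q^(m+1)`, because it contains a positive difference of `h`. -/
lemma iterate_delta_mul_modEq {b h : ℕ → ℤ} (hb : memFq q b) (hh : IsEpsFlat q h) (m x : ℕ) :
    delta^[m] (b * h) x ≡ delta^[m] b x * h x [ZMOD q ^ (m + 1)] := by
  have hmem : (m, 0) ∈ antidiagonal m := mem_antidiagonal.mpr rfl
  rw [delta_eq_fwdDiff, fwdDiff_iter_mul, ← add_sum_erase _ _ hmem, ← add_zero (_ * h x)]
  refine Int.ModEq.add ?_ (Int.modEq_zero_iff_dvd.mpr (dvd_sum fun ⟨i, j⟩ hij ↦ ?_))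
  · refine Int.modEq_iff_dvd.mpr ?_
    simp only [Nat.choose_self, Nat.cast_one, one_mul, Function.iterate_zero, id_eq, smul_eq_mul,
      mul_one]
    rw [← mul_sub, pow_succ]
    exact mul_dvd_mul (hb m x) (hh.apply_add_modEq x m).dvd
  · obtain ⟨hne, hij⟩ := mem_erase.mp hij
    obtain ⟨j, rfl⟩ : ∃ j', j = j' + 1 :=
      Nat.exists_eq_succ_of_ne_zero fun hj ↦ hne (by simp_all)
    dsimp only
    rw [← mem_antidiagonal.mp hij, add_assoc, pow_add]
    exact mul_dvd_mul (dvd_mul_of_dvd_right (hb i x) _) (hh j _)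

theorem epsq_mul_modEq (hq : q ≠ 0) {b h : ℕ → ℤ} (hb : memFq q b) (hh : IsEpsFlat q h)
    (m : ℕ) : epsq q (b * h) m ≡ epsq q b m * h 0 [ZMOD q] := by
  have hqm : (q : ℤ) ^ m ≠ 0 := pow_ne_zero _ (by exact_mod_cast hq)
  calc epsq q (b * h) m
      ≡ delta^[m] (b * h) 0 / q ^ m [ZMOD q] := Int.mod_modEq _ _
    _ ≡ delta^[m] b 0 * h 0 / q ^ m [ZMOD q] :=
        (pow_succ (q : ℤ) m ▸ iterate_delta_mul_modEq hb hh m 0).ediv_of_dvd hqm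
          (memFq_mul hb hh.memFq m 0) (dvd_mul_of_dvd_left (hb m 0) _)
    _ = delta^[m] b 0 / q ^ m * h 0 := Int.mul_ediv_assoc' _ (hb m 0)
    _ ≡ epsq q b m * h 0 [ZMOD q] := ((Int.mod_modEq _ _).symm).mul_right _

end Fq

section Tree
variable {q : ℕ} {b : ℕ → ℤ} {f : ℕ → ℕ → ℤ}

lemma sum_mul_prod_erase_ediv (hq : q ≠ 0) (a c : ℤ) :
    (∑ _i : Fin q, a * ∏ _j ∈ univ.erase _i, c) / q = a * c ^ (q - 1) := by
  simp [prod_const, card_erase_of_mem, hq]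

lemma tree_succ_eq (hq : q ≠ 0) {k : ℕ} (hfk : ∀ x : ℕ, f (k + 1) x = b x *
      ((∑ _i : Fin q, f k (x + 1) * ∏ _j ∈ Finset.univ.erase _i, f k x) / (q : ℤ))) :
    f (k + 1) = b * selfBracket q (f k) := by
  funext x
  rw [hfk, sum_mul_prod_erase_ediv hq]
  rfl

lemma tree_mem_Fq_and_zero_modEq (hq : q ≠ 0) (hb : memFq q b) (hf1 : f 1 = b)
    (hsucc : ∀ k, 1 ≤ k → f (k + 1) = b * selfBracket q (f k)) :
    ∀ k, 1 ≤ k → f k ∈ Fq q ∧ f k 0 ≡ b 0 ^ ∑ i ∈ range k, q ^ i [ZMOD q] := by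
  refine Nat.le_induction ⟨hf1 ▸ hb, by simp [hf1]⟩ fun k hk ⟨hmem, hval⟩ ↦ ?_
  rw [hsucc k hk]
  refine ⟨mul_mem hb (selfBracket_mem_Fq hmem), ?_⟩
  rw [geom_sum_succ, pow_succ', pow_mul']
  exact Int.ModEq.mul_left _ ((selfBracket_zero_modEq hq hmem).trans (hval.pow q))

end Tree

/-- For the average weight functions `f_k` of complete `q`-ary trees of depth `k`
(`f_1 = b`, `f_{k+1}(x) = b(x) · ⟨f_k, …, f_k⟩(x)` with `q` copies of `f_k`), one has
`ε_m^{f_k} ≡ ε_m^b · (ε_0^b)^((q^k−1)/(q−1) − 1) (mod q)`. -/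
theorem epsilon_complete_q_ary_tree
    (q : ℕ) (hq : 2 ≤ q)
    (b : ℕ → ℤ) (hb : memFq q b)
    (f : ℕ → ℕ → ℤ) (hf1 : f 1 = b)
    (hfk : ∀ k : ℕ, 1 ≤ k → ∀ x : ℕ, f (k + 1) x = b x *
      ((∑ _i : Fin q, f k (x + 1) * ∏ _j ∈ Finset.univ.erase _i, f k x) / (q : ℤ))) :
    ∀ k : ℕ, 1 ≤ k → ∀ m : ℕ,
      epsq q (f k) m ≡ epsq q b m * (epsq q b 0) ^ ((q ^ k - 1) / (q - 1) - 1)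
        [ZMOD (q : ℤ)] := by
  intro k hk m
  have hq0 : q ≠ 0 := by omega
  have hsucc j (hj : 1 ≤ j) := tree_succ_eq hq0 (hfk j hj)
  obtain ⟨j, rfl⟩ := Nat.exists_eq_add_of_le' hk
  rcases Nat.eq_zero_or_pos j with rfl | hj
  · simp [hf1, Nat.div_self (show 0 < q - 1 by omega)]
  obtain ⟨hmem, hval⟩ := tree_mem_Fq_and_zero_modEq hq0 hb hf1 hsucc j hj
  have hexp : (q ^ (j + 1) - 1) / (q - 1) - 1 = (∑ i ∈ range j, q ^ i) * q := by
    rw [← Nat.geomSum_eq hq, geom_sum_succ, Nat.add_sub_cancel, mul_comm]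
  have hb0 : epsq q b 0 ≡ b 0 [ZMOD q] := by simpa [epsq] using Int.mod_modEq (b 0) q
  rw [hsucc j hj, hexp, pow_mul]
  refine (epsq_mul_modEq hq0 hb (isEpsFlat_selfBracket hq0 hmem) m).trans
    (Int.ModEq.mul_left _ ?_)
  exact (selfBracket_zero_modEq hq0 hmem).trans ((hval.trans (hb0.symm.pow _)).pow q)
end

section
/- Let r ≥ 3 be an integer. Then the sequence of Morse link numbers L_n modulo 3^r is eventually periodic with period dividing 2·3^(r−3): there exists N ≥ 0 such that L_{n + 2·3^(r−3)} ≡ L_n (mod 3^r) for all n ≥ N. -/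
/-!
Truncating the weights at height `3m + 2` changes `L_n` only modulo `3 ^ (2m + 2)`, since the
weight `(2x + 1)²` is divisible by `9` at every height `x ≡ 1 (mod 3)`. The truncated generating
function is rational, `p / q` with continuants `p, q ∈ ℤ[X]`, and eventual `P`-periodicity modulo
`3 ^ r` amounts to `(1 - X ^ P) * p ∈ (q, 3 ^ r)`. Modulo `3`, `q ≡ (1 - X) (1 + X) ^ m`, which
divides `(1 - X ^ P) ^ 2 ≡ (1 - X ^ 2) ^ P` for `P = 2 * 3 ^ s ≥ m`; then
`1 - y ^ 3 = (1 - y) ((1 - y) ^ 2 + 3y)` lifts `(1 - X ^ P) * p ∈ (q, 3 ^ r)` to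
`(1 - X ^ (3P)) * p ∈ (q, 3 ^ (r + 1))`. The induction starts from an explicit identity for
`r = 3`, `P = 2`.
-/

/-- `wcat b n x`: `wcat b 0 x = 1` and
`wcat b (n+1) x = b x * ∑_{i+j=n} wcat b i (x+1) * wcat b j x`.
The weighted Catalan number `C_n^b` is `wcat b n 0`. -/
def wcat (b : ℕ → ℤ) : ℕ → ℕ → ℤ
  | 0, _ => 1
  | n + 1, x => b x * ∑ i ∈ (Finset.range (n + 1)).attach,
      wcat b i.1 (x + 1) * wcat b (n - i.1) x
termination_by n _ => n
decreasing_by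
  · exact Finset.mem_range.mp i.2
  · exact Nat.lt_succ_of_le (Nat.sub_le n i.1)

/-- `morseLink n` is the number `L_n` of combinatorial types of Morse links of
order `n`: the weighted Catalan number for the weight `b(x) = (2x+1)²`. -/
def morseLink (n : ℕ) : ℤ := wcat (fun x => (2 * (x : ℤ) + 1) ^ 2) n 0

open Filter Polynomial

lemma wcat_zero (b : ℕ → ℤ) (x : ℕ) : wcat b 0 x = 1 := by
  rw [wcat]

lemma wcat_succ (b : ℕ → ℤ) (n x : ℕ) :
    wcat b (n + 1) x =
      b x * ∑ i ∈ Finset.range (n + 1), wcat b i (x + 1) * wcat b (n - i) x := by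
  rw [wcat, Finset.sum_attach (Finset.range (n + 1)) fun i => wcat b i (x + 1) * wcat b (n - i) x]

lemma wcat_sub_wcat_dvd {b b' d : ℕ → ℤ} {T : ℕ} (hb : ∀ x < T, b' x = b x)
    (hd : ∀ x < T, d x ∣ b x * d (x + 1)) (hdT : IsUnit (d T)) (n : ℕ) :
    ∀ x ≤ T, d x ∣ wcat b n x - wcat b' n x := by
  induction n using Nat.strong_induction_on with
  | _ n ih =>
    intro x hx
    rcases n with _ | n
    · simp [wcat_zero]
    rcases hx.lt_or_eq with hx | rfl
    · have hsplit : ∀ i ∈ Finset.range (n + 1),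
          wcat b i (x + 1) * wcat b (n - i) x - wcat b' i (x + 1) * wcat b' (n - i) x =
            (wcat b i (x + 1) - wcat b' i (x + 1)) * wcat b (n - i) x +
              wcat b' i (x + 1) * (wcat b (n - i) x - wcat b' (n - i) x) := fun _ _ => by ring
      rw [wcat_succ, wcat_succ, hb x hx, ← mul_sub, ← Finset.sum_sub_distrib,
        Finset.sum_congr rfl hsplit, Finset.sum_add_distrib, mul_add]
      refine dvd_add ?_ (dvd_mul_of_dvd_right (Finset.dvd_sum fun i _ => ?_) _)
      · have hup : d (x + 1) ∣ ∑ i ∈ Finset.range (n + 1),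
            (wcat b i (x + 1) - wcat b' i (x + 1)) * wcat b (n - i) x :=
          Finset.dvd_sum fun i hi =>
            dvd_mul_of_dvd_left (ih i (Finset.mem_range.1 hi) (x + 1) hx) _
        exact (hd x hx).trans (mul_dvd_mul_left _ hup)
      · exact dvd_mul_of_dvd_right (ih (n - i) (by omega) x hx.le) _
    · exact hdT.dvd

def wcatSeries (b : ℕ → ℤ) (x : ℕ) : PowerSeries ℤ := PowerSeries.mk fun n => wcat b n x

lemma wcatSeries_eq (b : ℕ → ℤ) (x : ℕ) :
    wcatSeries b x =
      1 + PowerSeries.X * (PowerSeries.C (b x) * wcatSeries b (x + 1) * wcatSeries b x) := by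
  ext (_ | n)
  · simp [wcatSeries, wcat_zero]
  · rw [map_add, PowerSeries.coeff_succ_X_mul, mul_assoc, PowerSeries.coeff_C_mul,
      PowerSeries.coeff_mul, Finset.Nat.sum_antidiagonal_eq_sum_range_succ_mk]
    simp [wcatSeries, wcat_succ]

lemma wcatSeries_of_eq_zero {b : ℕ → ℤ} {T : ℕ} (hb : b T = 0) : wcatSeries b T = 1 := by
  rw [wcatSeries_eq, hb, map_zero, zero_mul, zero_mul, mul_zero, add_zero]

/-- With `a k = b (T - 1 - k)` and `b T = 0`, the generating function at height `T - k` is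
`continuant a k / continuant a (k + 1)` (see `continuant_mul_wcatSeries`). -/
noncomputable def continuant {R : Type*} [CommRing R] (a : ℕ → R) : ℕ → R[X]
  | 0 => 1
  | 1 => 1
  | k + 2 => continuant a (k + 1) - C (a k) * X * continuant a k

section Continuant

variable {R : Type*} [CommRing R]

lemma continuant_add_two (a : ℕ → R) (k : ℕ) :
    continuant a (k + 2) = continuant a (k + 1) - C (a k) * X * continuant a k := by
  rw [continuant]

lemma continuant_coeff_zero (a : ℕ → R) (k : ℕ) : (continuant a k).coeff 0 = 1 := by
  induction k using Nat.twoStepInduction with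
  | zero | one => simp [continuant]
  | more k _ ih => simp [continuant_add_two, ih]

lemma map_continuant {S : Type*} [CommRing S] (f : R →+* S) (a : ℕ → R) (k : ℕ) :
    (continuant a k).map f = continuant (f ∘ a) k := by
  induction k using Nat.twoStepInduction with
  | zero | one => simp [continuant]
  | more k ih₀ ih₁ => simp [continuant_add_two, ih₀, ih₁]

end Continuant

lemma continuant_mul_wcatSeries {b : ℕ → ℤ} {T k : ℕ} (hb : b T = 0) (hk : k ≤ T) :
    (continuant (fun j => b (T - 1 - j)) (k + 1) : PowerSeries ℤ) * wcatSeries b (T - k) =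
      continuant (fun j => b (T - 1 - j)) k := by
  induction k with
  | zero => simp [continuant, wcatSeries_of_eq_zero hb]
  | succ k ih =>
    set x := T - (k + 1)
    have hx : x + 1 = T - k := by omega
    rw [continuant_add_two, show T - 1 - k = x by omega]
    push_cast
    rw [← ih (by omega), ← hx]
    linear_combination (continuant (fun j => b (T - 1 - j)) (k + 1) : PowerSeries ℤ) *
      wcatSeries_eq b x

section RationalSeries

variable {R : Type*} [CommRing R] {F : PowerSeries R} {p q u : R[X]} {a : R}

lemma eventually_dvd_coeff_of_mem_span (hq : IsUnit (q.coeff 0))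
    (hF : (q : PowerSeries R) * F = p) (h : u * p ∈ Ideal.span {q, C a}) :
    ∀ᶠ n in atTop, a ∣ PowerSeries.coeff n ((u : PowerSeries R) * F) := by
  obtain ⟨g, h, hgh⟩ := Ideal.mem_span_pair.mp h
  obtain ⟨w, hw⟩ := (PowerSeries.isUnit_iff_constantCoeff.2
    (by rwa [Polynomial.constantCoeff_coe])).exists_right_inv (a := (q : PowerSeries R))
  have hgh' : (g : PowerSeries R) * q + h * PowerSeries.C a = u * p := by
    simpa using congrArg (fun f : R[X] => (f : PowerSeries R)) hgh
  have hsplit : (u : PowerSeries R) * F = g + PowerSeries.C a * (h * w) := by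
    linear_combination (u * w) * hF - w * hgh' - (u * F - g) * hw
  filter_upwards [eventually_gt_atTop g.natDegree] with n hn
  rw [hsplit, map_add, PowerSeries.coeff_C_mul, Polynomial.coeff_coe,
    Polynomial.coeff_eq_zero_of_natDegree_lt hn, zero_add]
  exact dvd_mul_right _ _

lemma mem_span_of_eventually_dvd_coeff (hF : (q : PowerSeries R) * F = p)
    (h : ∀ᶠ n in atTop, a ∣ PowerSeries.coeff n ((u : PowerSeries R) * F)) :
    u * p ∈ Ideal.span {q, C a} := by
  obtain ⟨N, hN⟩ := eventually_atTop.mp h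
  set g := PowerSeries.trunc N ((u : PowerSeries R) * F)
  have hdvd : ∀ n, a ∣ PowerSeries.coeff n ((u : PowerSeries R) * F - g) := by
    intro n
    rw [map_sub, Polynomial.coeff_coe, PowerSeries.coeff_trunc]
    split_ifs with hn
    · simp
    · simpa using hN n (by omega)
  choose c hc using hdvd
  have hsplit : (u : PowerSeries R) * F - g = PowerSeries.C a * PowerSeries.mk c := by
    ext n
    rw [hc, PowerSeries.coeff_C_mul, PowerSeries.coeff_mk]
  obtain ⟨h, hh⟩ : C a ∣ u * p - q * g := by
    refine (C_dvd_iff_dvd_coeff _ _).2 fun n => ⟨PowerSeries.coeff n (q * PowerSeries.mk c), ?_⟩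
    rw [← Polynomial.coeff_coe, ← PowerSeries.coeff_C_mul]
    push_cast
    rw [← hF]
    congr 1
    linear_combination (q : PowerSeries R) * hsplit
  exact Ideal.mem_span_pair.2 ⟨g, h, by linear_combination -hh⟩

lemma eventually_dvd_coeff_iff_mem_span (hq : IsUnit (q.coeff 0))
    (hF : (q : PowerSeries R) * F = p) :
    (∀ᶠ n in atTop, a ∣ PowerSeries.coeff n ((u : PowerSeries R) * F)) ↔
      u * p ∈ Ideal.span {q, C a} :=
  ⟨mem_span_of_eventually_dvd_coeff hF, eventually_dvd_coeff_of_mem_span hq hF⟩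

end RationalSeries

lemma coeff_one_sub_X_pow_mul_mk {R : Type*} [CommRing R] (f : ℕ → R) (P n : ℕ) :
    PowerSeries.coeff (n + P) (((1 - X ^ P : R[X]) : PowerSeries R) * PowerSeries.mk f) =
      f (n + P) - f n := by
  push_cast
  rw [sub_mul, one_mul, map_sub, PowerSeries.coeff_mk, add_comm n P,
    PowerSeries.coeff_X_pow_mul', if_pos (Nat.le_add_right P n), Nat.add_sub_cancel_left,
    PowerSeries.coeff_mk]

lemma eventually_modEq_iff_dvd_coeff (f : ℕ → ℤ) (a : ℤ) (P : ℕ) :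
    (∀ᶠ n in atTop, f (n + P) ≡ f n [ZMOD a]) ↔
      ∀ᶠ n in atTop, a ∣
        PowerSeries.coeff n (((1 - X ^ P : ℤ[X]) : PowerSeries ℤ) * PowerSeries.mk f) := by
  conv_rhs => rw [← map_add_atTop_eq_nat P, eventually_map]
  simp only [coeff_one_sub_X_pow_mul_mk, Int.modEq_comm (a := f (_ + P)), Int.modEq_iff_dvd]

lemma continuant_zmod_three {a : ℕ → ZMod 3} {m : ℕ}
    (ha : ∀ k ≤ 3 * m + 1, a k = if k % 3 = 0 then 0 else 1) :
    continuant a (3 * m + 3) = (1 - X) * (1 + X) ^ m := by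
  have h3 : (3 : (ZMod 3)[X]) = 0 := by simpa using CharP.cast_eq_zero (ZMod 3)[X] 3
  have ha₀ (i : ℕ) (hi : i ≤ m) : a (3 * i) = 0 := by rw [ha _ (by omega), if_pos (by omega)]
  have ha₁ (i : ℕ) (hi : i ≤ m) : a (3 * i + 1) = 1 := by
    rw [ha _ (by omega), if_neg (by omega)]
  have ha₂ (i : ℕ) (hi : i < m) : a (3 * i + 2) = 1 := by
    rw [ha _ (by omega), if_neg (by omega)]
  have hstep (i : ℕ) (hi : i ≤ m) (h₁ : continuant a (3 * i + 1) = (1 + X) ^ i)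
      (h₂ : continuant a (3 * i + 2) = (1 + X) ^ i) :
      continuant a (3 * i + 3) = (1 - X) * (1 + X) ^ i := by
    rw [continuant_add_two, ha₁ i hi, h₁, h₂]
    simp only [map_one]
    ring
  have hblock (i : ℕ) (hi : i ≤ m) :
      continuant a (3 * i + 1) = (1 + X) ^ i ∧ continuant a (3 * i + 2) = (1 + X) ^ i := by
    induction i with
    | zero => simp [continuant, ha₀ 0 hi]
    | succ i ih =>
      obtain ⟨h₁, h₂⟩ := ih (by omega)
      have h₄ : continuant a (3 * (i + 1) + 1) = (1 + X) ^ (i + 1) := by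
        rw [show 3 * (i + 1) + 1 = 3 * i + 2 + 2 by ring, continuant_add_two,
          hstep i (by omega) h₁ h₂, ha₂ i (by omega), h₂]
        simp only [map_one]
        linear_combination (-X * (1 + X) ^ i) * h3
      refine ⟨h₄, ?_⟩
      rw [continuant_add_two, h₄, ha₀ (i + 1) hi]
      simp
  obtain ⟨h₁, h₂⟩ := hblock m le_rfl
  exact hstep m le_rfl h₁ h₂

lemma mem_span_pair_of_map_dvd {p : ℕ} {q y : ℤ[X]}
    (h : q.map (Int.castRingHom (ZMod p)) ∣ y.map (Int.castRingHom (ZMod p))) :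
    y ∈ Ideal.span {q, (p : ℤ[X])} := by
  obtain ⟨z', hz'⟩ := h
  obtain ⟨z, rfl⟩ := map_surjective (Int.castRingHom (ZMod p)) ZMod.intCast_surjective z'
  have hker : y - q * z ∈ RingHom.ker (mapRingHom (Int.castRingHom (ZMod p))) := by
    simp [RingHom.mem_ker, hz']
  rw [ker_mapRingHom, ZMod.ker_intCastRingHom, Ideal.map_span, Set.image_singleton,
    Ideal.mem_span_singleton] at hker
  obtain ⟨w, hw⟩ := hker
  exact Ideal.mem_span_pair.2 ⟨z, w, by rw [map_natCast] at hw; linear_combination -hw⟩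

section IdealStep

variable {R : Type*} [CommRing R]

lemma mul_mem_span_pair_pow_succ {q c x y : R} {r : ℕ} (hx : x ∈ Ideal.span {q, c ^ r})
    (hy : y ∈ Ideal.span {q, c}) : x * y ∈ Ideal.span {q, c ^ (r + 1)} := by
  obtain ⟨a, b, rfl⟩ := Ideal.mem_span_pair.1 hx
  obtain ⟨a', b', rfl⟩ := Ideal.mem_span_pair.1 hy
  exact Ideal.mem_span_pair.2 ⟨a * a' * q + a * b' * c + b * a' * c ^ r, b * b', by ring⟩

lemma one_sub_pow_three_mul_mem_span {q p y : R} {r : ℕ}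
    (h : (1 - y) * p ∈ Ideal.span {q, 3 ^ r}) (hsq : (1 - y) ^ 2 ∈ Ideal.span {q, 3}) :
    (1 - y ^ 3) * p ∈ Ideal.span {q, 3 ^ (r + 1)} := by
  rw [show (1 - y ^ 3) * p = (1 - y) * p * ((1 - y) ^ 2 + 3 * y) by ring]
  exact mul_mem_span_pair_pow_succ h
    (Ideal.add_mem _ hsq (Ideal.mul_mem_right _ _ (Ideal.subset_span (by simp))))

end IdealStep

def morseWeight (x : ℕ) : ℤ := (2 * x + 1) ^ 2

lemma morseLink_eq_wcat (n : ℕ) : morseLink n = wcat morseWeight n 0 := rfl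

lemma morseLink_sub_wcat_indicator_dvd (m n : ℕ) :
    9 ^ (m + 1) ∣ morseLink n - wcat ((Set.Iio (3 * m + 2)).indicator morseWeight) n 0 := by
  rw [morseLink_eq_wcat]
  -- `(3m + 4 - x) / 3` counts the heights `y ≡ 1 (mod 3)` with `x ≤ y < 3m + 2`.
  have hd : ∀ x < 3 * m + 2,
      (9 : ℤ) ^ ((3 * m + 4 - x) / 3) ∣ morseWeight x * 9 ^ ((3 * m + 4 - (x + 1)) / 3) := by
    intro x hx
    by_cases hx1 : x % 3 = 1
    · obtain ⟨j, rfl⟩ : ∃ j, x = 3 * j + 1 := ⟨x / 3, by omega⟩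
      rw [show (3 * m + 4 - (3 * j + 1)) / 3 = (3 * m + 4 - (3 * j + 1 + 1)) / 3 + 1 by omega,
        pow_succ, morseWeight]
      exact ⟨(2 * j + 1) ^ 2, by push_cast; ring⟩
    · rw [show (3 * m + 4 - x) / 3 = (3 * m + 4 - (x + 1)) / 3 by omega]
      exact dvd_mul_left _ _
  have h := wcat_sub_wcat_dvd (b' := (Set.Iio (3 * m + 2)).indicator morseWeight)
    (fun x hx => Set.indicator_of_mem (Set.mem_Iio.2 hx) _) hd (by simp) n 0 (Nat.zero_le _)
  rwa [show (3 * m + 4 - 0) / 3 = m + 1 by omega] at h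

lemma morseWeight_cast_zmod_three (x : ℕ) :
    (morseWeight x : ZMod 3) = if x % 3 = 1 then 0 else 1 := by
  obtain ⟨q, r, hr, rfl⟩ : ∃ q r, r < 3 ∧ x = 3 * q + r :=
    ⟨x / 3, x % 3, x.mod_lt (by norm_num), (Nat.div_add_mod x 3).symm⟩
  split_ifs with h <;> interval_cases r <;>
    first | omega | (simp only [morseWeight]; push_cast; ring_nf; reduce_mod_char)

noncomputable def morseContinuant (m : ℕ) : ℕ → ℤ[X] :=
  continuant fun k => morseWeight (3 * m + 1 - k)

lemma morseContinuant_mul_wcatSeries (m : ℕ) :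
    (morseContinuant m (3 * m + 3) : PowerSeries ℤ) *
        wcatSeries ((Set.Iio (3 * m + 2)).indicator morseWeight) 0 =
      morseContinuant m (3 * m + 2) := by
  have hb : (fun j => (Set.Iio (3 * m + 2)).indicator morseWeight (3 * m + 2 - 1 - j)) =
      fun j => morseWeight (3 * m + 1 - j) := by
    ext j
    rw [Set.indicator_of_mem (Set.mem_Iio.2 (by omega)),
      show 3 * m + 2 - 1 - j = 3 * m + 1 - j by omega]
  have h := continuant_mul_wcatSeries (b := (Set.Iio (3 * m + 2)).indicator morseWeight)
    (T := 3 * m + 2) (k := 3 * m + 2) (by simp) le_rfl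
  rwa [hb, Nat.sub_self] at h

lemma morseLink_eventually_modEq_iff {m r : ℕ} (P : ℕ) (hr : r ≤ 2 * (m + 1)) :
    (∀ᶠ n in atTop, morseLink (n + P) ≡ morseLink n [ZMOD 3 ^ r]) ↔
      (1 - X ^ P) * morseContinuant m (3 * m + 2) ∈
        Ideal.span {morseContinuant m (3 * m + 3), 3 ^ r} := by
  set b := (Set.Iio (3 * m + 2)).indicator morseWeight
  have hclose (n : ℕ) : wcat b n 0 ≡ morseLink n [ZMOD 3 ^ r] := by
    refine Int.modEq_iff_dvd.2 (dvd_trans ?_ (morseLink_sub_wcat_indicator_dvd m n))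
    rw [show (9 : ℤ) = 3 ^ 2 by norm_num, ← pow_mul]
    exact pow_dvd_pow 3 hr
  have htrunc : (∀ᶠ n in atTop, morseLink (n + P) ≡ morseLink n [ZMOD 3 ^ r]) ↔
      ∀ᶠ n in atTop, wcat b (n + P) 0 ≡ wcat b n 0 [ZMOD 3 ^ r] :=
    eventually_congr (Eventually.of_forall fun n =>
      ⟨fun h => ((hclose _).trans h).trans (hclose n).symm,
        fun h => ((hclose _).symm.trans h).trans (hclose n)⟩)
  have hq : IsUnit ((morseContinuant m (3 * m + 3)).coeff 0) := by
    rw [morseContinuant, continuant_coeff_zero]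
    exact isUnit_one
  rw [htrunc, eventually_modEq_iff_dvd_coeff (fun n => wcat b n 0),
    show (3 : ℤ[X]) ^ r = C (3 ^ r) by simp,
    ← eventually_dvd_coeff_iff_mem_span hq (morseContinuant_mul_wcatSeries m)]
  rfl

lemma map_morseContinuant (m : ℕ) :
    (morseContinuant m (3 * m + 3)).map (Int.castRingHom (ZMod 3)) = (1 - X) * (1 + X) ^ m := by
  rw [morseContinuant, map_continuant]
  refine continuant_zmod_three fun k hk => ?_
  simp only [Function.comp_apply, eq_intCast, morseWeight_cast_zmod_three]
  exact if_congr (by omega) rfl rfl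

lemma one_sub_X_pow_sq_mem_span_morseContinuant {m s : ℕ} (hm : m ≤ 2 * 3 ^ s) :
    (1 - X ^ (2 * 3 ^ s)) ^ 2 ∈ Ideal.span {morseContinuant m (3 * m + 3), 3} := by
  have hfrob : (1 - X ^ (2 * 3 ^ s) : (ZMod 3)[X]) = ((1 - X) * (1 + X)) ^ 3 ^ s := by
    rw [show (1 - X) * (1 + X) = (1 - X ^ 2 : (ZMod 3)[X]) by ring, sub_pow_char_pow, one_pow,
      ← pow_mul]
  refine mem_span_pair_of_map_dvd (p := 3) ?_
  rw [map_morseContinuant, Polynomial.map_pow, Polynomial.map_sub, Polynomial.map_one,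
    Polynomial.map_pow, Polynomial.map_X, hfrob, ← pow_mul, mul_pow]
  exact mul_dvd_mul (dvd_pow_self _ (by positivity)) (pow_dvd_pow _ (by omega))

lemma one_sub_X_sq_mul_morseContinuant_mem_span :
    (1 - X ^ 2) * morseContinuant 1 5 ∈ Ideal.span {morseContinuant 1 6, 3 ^ 3} := by
  have hp : morseContinuant 1 5 = 1 - 164 * X + 3195 * X ^ 2 := by
    simp only [morseContinuant, continuant, morseWeight]
    norm_num
    ring
  have hq : morseContinuant 1 6 = 1 - 165 * X + 3350 * X ^ 2 - 2025 * X ^ 3 := by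
    simp only [morseContinuant, continuant, morseWeight]
    norm_num
    ring
  refine Ideal.mem_span_pair.2 ⟨1 + X + 9 * X ^ 2, 12 * X ^ 3 - 1160 * X ^ 4 + 675 * X ^ 5, ?_⟩
  rw [hp, hq]
  ring

theorem morseLink_eventually_modEq (s : ℕ) :
    ∀ᶠ n in atTop, morseLink (n + 2 * 3 ^ s) ≡ morseLink n [ZMOD 3 ^ (s + 3)] := by
  induction s with
  | zero =>
    exact (morseLink_eventually_modEq_iff (m := 1) _ (by norm_num)).2
      one_sub_X_sq_mul_morseContinuant_mem_span
  | succ s ih =>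
    have hm : s + 1 ≤ 2 * 3 ^ s := by
      have := Nat.lt_pow_self (n := s) (a := 3) (by norm_num)
      omega
    rw [morseLink_eventually_modEq_iff (m := s + 1) _ (by omega)] at ih ⊢
    have h := one_sub_pow_three_mul_mem_span ih (one_sub_X_pow_sq_mem_span_morseContinuant hm)
    rwa [← pow_mul, show 2 * 3 ^ s * 3 = 2 * 3 ^ (s + 1) by ring, add_right_comm s 3 1] at h

/-- For `r ≥ 3`, the sequence `L_n (mod 3^r)` is eventually periodic with period
dividing `2·3^(r−3)`. -/
theorem morseLink_eventually_periodic_mod_three_pow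
    (r : ℕ) (hr : 3 ≤ r) :
    ∃ N : ℕ, ∀ n : ℕ, N ≤ n →
      morseLink (n + 2 * 3 ^ (r - 3)) ≡ morseLink n [ZMOD (3 : ℤ) ^ r] := by
  obtain ⟨s, rfl⟩ : ∃ s, r = s + 3 := ⟨r - 3, by omega⟩
  simpa using eventually_atTop.1 (morseLink_eventually_modEq s)
end
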